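/- arXiv:1806.02048 — 3 statements merged into one kernel-verified Lean document; each statement's English description precedes it below -/
import Mathlib

section
/- With L, R, D as in the gate-dependent-noise theorem and Δ_G := 𝓖̃ − L𝓖R, for any j ≥ 2 and any Ĝ the fully averaged operator E_{G_1,...,G_m}[𝓖̃_inv 𝓖̃_m ⋯ 𝓖̃_{j+1} L 𝓖_j R Δ_{G_{j-1}} ⋯ Δ_{G_1 Ĝ}] equals zero. -/
/-!
Write `B = G_{j-1} ⋯ G_2` and `A = G_m ⋯ G_{j+1}`. Substituting `G_j = u (B G_1)⁻¹` and
using that `φ` is a homomorphism, the summand splits as a factor depending on `(A, u)` times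
`φ((B G_1)⁻¹) R Δ(G_{j-1}) ⋯ Δ(G_1 ĥ)`. In the average of the latter over the gates, the outermost
gate `x` (that is `G_{j-1}`, or `G_1` when `j = 2`) appears only through `φ(x⁻¹) R Δ(x)`, whose
average is `D R - D R = 0` by the two eigen-relations.
-/

open Matrix

theorem Fintype.sum_pi_fin_succ_eq_sum_snoc {α β : Type*} [Fintype α] [AddCommMonoid β] {m : ℕ}
    (F : (Fin (m + 1) → α) → β) :
    ∑ b : Fin (m + 1) → α, F b = ∑ x : α, ∑ b : Fin m → α, F (Fin.snoc b x) := by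
  rw [← (Fin.snocEquiv fun _ => α).sum_comp, Fintype.sum_prod_type]
  rfl

theorem List.prod_reverse_ofFn_snoc {α : Type*} [Monoid α] {m : ℕ} (f : Fin m → α) (x : α) :
    (List.ofFn (Fin.snoc f x : Fin (m + 1) → α)).reverse.prod = x * (List.ofFn f).reverse.prod := by
  rw [List.ofFn_succ']
  simp

section Twirl

variable {n : ℕ} {G : Type*} [Group G] [Fintype G] (φ : G →* Matrix (Fin n) (Fin n) ℝ)

theorem sum_map_inv_mul_mul_sub_eq_zero (φt : G → Matrix (Fin n) (Fin n) ℝ)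
    (L R D : Matrix (Fin n) (Fin n) ℝ)
    (hR : (Fintype.card G : ℝ)⁻¹ • ∑ g : G, φ g⁻¹ * R * φt g = D * R)
    (hRL : (Fintype.card G : ℝ)⁻¹ • ∑ g : G, φ g * (R * L) * φ g⁻¹ = D) :
    ∑ g : G, φ g⁻¹ * R * (φt g - L * φ g * R) = 0 := by
  have hcard : (Fintype.card G : ℝ) ≠ 0 := Nat.cast_ne_zero.2 Fintype.card_ne_zero
  have hRL' : ∑ g : G, φ g⁻¹ * (R * L) * φ g = ∑ g : G, φ g * (R * L) * φ g⁻¹ :=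
    Fintype.sum_equiv (Equiv.inv G) _ _ fun g => by simp
  have hsplit : ∀ g : G, φ g⁻¹ * R * (φt g - L * φ g * R)
      = φ g⁻¹ * R * φt g - φ g⁻¹ * (R * L) * φ g * R := fun g => by noncomm_ring
  have hsum : ∑ g : G, φ g⁻¹ * R * (φt g - L * φ g * R)
      = (Fintype.card G : ℝ) • (D * R) - ((Fintype.card G : ℝ) • D) * R := by
    rw [← hR, ← hRL, smul_smul, smul_smul, mul_inv_cancel₀ hcard, one_smul, one_smul, ← hRL',
      Finset.sum_mul, ← Finset.sum_sub_distrib]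
    exact Finset.sum_congr rfl fun g _ => hsplit g
  rw [hsum, smul_mul_assoc, sub_self]

theorem sum_mul_map_mul_right (F : G → Matrix (Fin n) (Fin n) ℝ) (c : G) :
    ∑ g : G, F (g * c) * φ g = (∑ g : G, F g * φ g) * φ c⁻¹ := by
  rw [Finset.sum_mul, Fintype.sum_equiv (Equiv.mulRight c) _ (fun g => F g * φ (g * c⁻¹))
    fun g => by simp]
  simp only [map_mul, mul_assoc]

variable {M : Matrix (Fin n) (Fin n) ℝ} {Δ : G → Matrix (Fin n) (Fin n) ℝ}

theorem sum_map_inv_mul_mul_apply_mul_right_eq_zero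
    (h0 : ∑ g : G, φ g⁻¹ * M * Δ g = 0) (h : G) :
    ∑ g : G, φ g⁻¹ * M * Δ (g * h) = 0 := by
  have hshift : ∀ g : G, φ g⁻¹ * M * Δ (g * h) = φ h * (φ (g * h)⁻¹ * M * Δ (g * h)) :=
    fun g => by
      simp only [_root_.mul_inv_rev, map_mul, ← mul_assoc]
      rw [← map_mul, mul_inv_cancel, map_one, one_mul]
  rw [Finset.sum_congr rfl fun g _ => hshift g, ← Finset.mul_sum]
  exact mul_eq_zero_of_right _ ((Fintype.sum_equiv (Equiv.mulRight h) _ _ fun _ => rfl).trans h0)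

theorem sum_sum_map_inv_mul_mul_list_prod_eq_zero
    (h0 : ∑ g : G, φ g⁻¹ * M * Δ g = 0) (m : ℕ) (h : G) :
    ∑ b : Fin m → G, ∑ g₁ : G,
      φ ((List.ofFn b).reverse.prod * g₁)⁻¹ * M *
        (List.ofFn fun i => Δ (b i)).reverse.prod * Δ (g₁ * h) = 0 := by
  cases m with
  | zero =>
    simpa using sum_map_inv_mul_mul_apply_mul_right_eq_zero φ h0 h
  | succ m =>
    -- split off the last gate `x = b (last m)`, the leftmost factor of both products
    rw [Fintype.sum_pi_fin_succ_eq_sum_snoc, Finset.sum_comm]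
    refine Finset.sum_eq_zero fun b _ => ?_
    rw [Finset.sum_comm]
    refine Finset.sum_eq_zero fun g₁ _ => ?_
    have hfactor : ∀ x : G,
        φ ((List.ofFn (Fin.snoc b x : Fin (m + 1) → G)).reverse.prod * g₁)⁻¹ * M *
            (List.ofFn fun i => Δ ((Fin.snoc b x : Fin (m + 1) → G) i)).reverse.prod * Δ (g₁ * h)
          = φ ((List.ofFn b).reverse.prod * g₁)⁻¹ * (φ x⁻¹ * M * Δ x) *
            ((List.ofFn fun i => Δ (b i)).reverse.prod * Δ (g₁ * h)) := fun x => by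
      rw [List.prod_reverse_ofFn_snoc, show (fun i => Δ ((Fin.snoc b x : Fin (m + 1) → G) i)) =
        Fin.snoc (fun i => Δ (b i)) (Δ x) from Fin.comp_snoc .., List.prod_reverse_ofFn_snoc]
      simp only [mul_assoc, _root_.mul_inv_rev, map_mul]
    rw [Finset.sum_congr rfl fun x _ => hfactor x, ← Finset.sum_mul, ← Finset.mul_sum, h0,
      mul_zero, zero_mul]

end Twirl

theorem stmt_10_general {n : ℕ} {G : Type*} [Group G] [Fintype G]
    (φ : G →* Matrix (Fin n) (Fin n) ℝ)
    (φt : G → Matrix (Fin n) (Fin n) ℝ)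
    (L R D : Matrix (Fin n) (Fin n) ℝ)
    (hR : (Fintype.card G : ℝ)⁻¹ • ∑ g : G, φ g⁻¹ * R * φt g = D * R)
    (hRL : (Fintype.card G : ℝ)⁻¹ • ∑ g : G, φ g * (R * L) * φ g⁻¹ = D)
    (Δ : G → Matrix (Fin n) (Fin n) ℝ)
    (hΔ : ∀ g, Δ g = φt g - L * φ g * R)
    (hgate : G) (k j'' : ℕ) :
    ((Fintype.card G : ℝ) ^ (k + j'' + 2))⁻¹ •
      (∑ a : Fin k → G, ∑ gj : G, ∑ b : Fin j'' → G, ∑ g1 : G,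
        φt (((List.ofFn a).reverse.prod * gj * (List.ofFn b).reverse.prod * g1)⁻¹) *
          ((List.ofFn fun i => φt (a i)).reverse.prod) *
          (L * φ gj * R) *
          ((List.ofFn fun i => Δ (b i)).reverse.prod) *
          Δ (g1 * hgate)) = 0 := by
  have hnoise : ∑ g : G, φ g⁻¹ * R * Δ g = 0 := by
    simpa only [hΔ] using sum_map_inv_mul_mul_sub_eq_zero φ φt L R D hR hRL
  refine smul_eq_zero_of_right _ (Finset.sum_eq_zero fun a _ => ?_)
  set T := ∑ u : G, φt (((List.ofFn a).reverse.prod * u)⁻¹) *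
    (List.ofFn fun i => φt (a i)).reverse.prod * L * φ u with hT
  -- substitute `gj = u * (B * g1)⁻¹`, where `B` is the product of the gates `b`
  have hfactor : ∀ (b : Fin j'' → G) (g1 : G),
      ∑ gj : G, φt (((List.ofFn a).reverse.prod * gj * (List.ofFn b).reverse.prod * g1)⁻¹) *
          ((List.ofFn fun i => φt (a i)).reverse.prod) * (L * φ gj * R) *
          ((List.ofFn fun i => Δ (b i)).reverse.prod) * Δ (g1 * hgate)
        = T * (φ ((List.ofFn b).reverse.prod * g1)⁻¹ * R *
          (List.ofFn fun i => Δ (b i)).reverse.prod * Δ (g1 * hgate)) := fun b g1 => by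
    have key := sum_mul_map_mul_right φ (fun u => φt (((List.ofFn a).reverse.prod * u)⁻¹) *
      (List.ofFn fun i => φt (a i)).reverse.prod * L) ((List.ofFn b).reverse.prod * g1)
    rw [← hT] at key
    simp only [mul_assoc] at key ⊢
    rw [← mul_assoc T, ← key, Finset.sum_mul]
    simp only [mul_assoc]
  rw [Finset.sum_comm]
  refine (Finset.sum_congr rfl fun b _ => Finset.sum_comm).trans ?_
  simp only [hfactor, ← Finset.mul_sum, sum_sum_map_inv_mul_mul_list_prod_eq_zero φ hnoise, mul_zero]

/-- With `L`, `R`, `D` as in the gate-dependent-noise eigenoperator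
theorem and `Δ g := φt g − L * φ g * R`, for any `j ≥ 2` (here `j = j'' + 2`, with
`j''` gates `b` strictly between positions `2` and `j-1`, `k` gates `a` after position
`j`, and first gate `g1` compiled with the character gate `ĥ`) the fully averaged
operator
`𝔼[φt(G_inv) φt(G_m) ⋯ φt(G_{j+1}) (L φ(G_j) R) Δ(G_{j-1}) ⋯ Δ(G_2) Δ(G_1 ĥ)]`
vanishes, where `G_inv = (G_m ⋯ G_1)⁻¹`. -/
theorem stmt_10 {n : ℕ} {G : Type*} [Group G] [Fintype G]
    (φ : G →* Matrix (Fin n) (Fin n) ℝ)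
    (φt : G → Matrix (Fin n) (Fin n) ℝ)
    (L R D : Matrix (Fin n) (Fin n) ℝ)
    (hR : (Fintype.card G : ℝ)⁻¹ • ∑ g : G, φ g⁻¹ * R * φt g = D * R)
    (hRL : (Fintype.card G : ℝ)⁻¹ • ∑ g : G, φ g * (R * L) * φ g⁻¹ = D)
    (hD : ∀ g, D * φ g = φ g * D)
    (Δ : G → Matrix (Fin n) (Fin n) ℝ)
    (hΔ : ∀ g, Δ g = φt g - L * φ g * R)
    (hgate : G) (k j'' : ℕ) :
    ((Fintype.card G : ℝ) ^ (k + j'' + 2))⁻¹ •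
      (∑ a : Fin k → G, ∑ gj : G, ∑ b : Fin j'' → G, ∑ g1 : G,
        φt (((List.ofFn a).reverse.prod * gj * (List.ofFn b).reverse.prod * g1)⁻¹) *
          ((List.ofFn fun i => φt (a i)).reverse.prod) *
          (L * φ gj * R) *
          ((List.ofFn fun i => Δ (b i)).reverse.prod) *
          Δ (g1 * hgate)) = 0 :=
  stmt_10_general φ φt L R D hR hRL Δ hΔ hgate k j''
end

section
/- The character randomized benchmarking signal under gate-dependent noise deviates from a single exponential by at most ε_m ≤ δ_1 δ_2^m, where δ_1 = |φ̂| · max_{Ĝ} |χ_φ̂(Ĝ)| · max_G ‖Δ_G‖_◇ and δ_2 = E_{G∈G} ‖Δ_G‖_◇. Concretely, ε_m = |φ̂| E_{Ĝ, G_1,...,G_m} χ_φ̂(Ĝ) ⟨⟨Q| Δ_{G_inv} Δ_{G_m} ⋯ Δ_{G_1 Ĝ} |ρ⟩⟩ satisfies |ε_m| ≤ δ_1 δ_2^m. -/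
/-!
Each summand is bounded termwise: `|⟨⟨Q| A |ρ⟩⟩| ≤ ‖A‖_◇`, and submultiplicativity splits the
norm of the word `Δ(G_inv) Δ(G_m) ⋯ Δ(G_1 Ĝ)` into `‖Δ(G_inv)‖_◇ ∏ᵢ ‖Δ(·)‖_◇`. The first factor
is bounded by the maximum, and the remaining product averages to `δ₂^m` because the gates are
independent and the twist `G_1 ↦ G_1 Ĝ` is a bijection of `G`.
-/

section Submultiplicative

variable {M : Type*} [Monoid M] {ν : M → ℝ}

/-- The leading factor `a` replaces the hypothesis `ν 1 ≤ 1` of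
`List.le_prod_of_submultiplicative`. -/
theorem List.apply_mul_prod_le_of_submultiplicative (hνsub : ∀ a b, ν (a * b) ≤ ν a * ν b)
    (hν0 : ∀ a, 0 ≤ ν a) (a : M) (l : List M) :
    ν (a * l.prod) ≤ ν a * (l.map ν).prod := by
  induction l generalizing a with
  | nil => simp
  | cons b l ih =>
    have hl : 0 ≤ (l.map ν).prod := List.prod_nonneg (by simp [hν0])
    calc ν (a * (b :: l).prod) = ν (a * b * l.prod) := by rw [List.prod_cons, mul_assoc]
      _ ≤ ν (a * b) * (l.map ν).prod := ih (a * b)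
      _ ≤ ν a * ν b * (l.map ν).prod := mul_le_mul_of_nonneg_right (hνsub a b) hl
      _ = ν a * ((b :: l).map ν).prod := by simp [mul_assoc]

theorem apply_mul_ofFn_reverse_prod_le {m : ℕ} (hνsub : ∀ a b, ν (a * b) ≤ ν a * ν b)
    (hν0 : ∀ a, 0 ≤ ν a) (a : M) (f : Fin m → M) :
    ν (a * (List.ofFn f).reverse.prod) ≤ ν a * ∏ i, ν (f i) := by
  have h := List.apply_mul_prod_le_of_submultiplicative hνsub hν0 a (List.ofFn f).reverse
  rwa [List.map_reverse, List.map_ofFn, List.prod_reverse (List.ofFn (ν ∘ f)),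
    List.prod_ofFn] at h

end Submultiplicative

theorem abs_dotProduct_mul_ofFn_reverse_prod_mulVec_le {ι : Type*} [Fintype ι] [DecidableEq ι]
    {m : ℕ} {ν : Matrix ι ι ℝ → ℝ} (hνsub : ∀ A B, ν (A * B) ≤ ν A * ν B) (hν0 : ∀ A, 0 ≤ ν A)
    {Q ρ : ι → ℝ} (hνQ : ∀ A : Matrix ι ι ℝ, |Q ⬝ᵥ A.mulVec ρ| ≤ ν A)
    {A : Matrix ι ι ℝ} {c : ℝ} (hA : ν A ≤ c) (f : Fin m → Matrix ι ι ℝ) :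
    |Q ⬝ᵥ (A * (List.ofFn f).reverse.prod).mulVec ρ| ≤ c * ∏ i, ν (f i) :=
  (hνQ _).trans <| (apply_mul_ofFn_reverse_prod_le hνsub hν0 A f).trans <|
    mul_le_mul_of_nonneg_right hA (Finset.prod_nonneg fun _ _ => hν0 _)

theorem sum_pi_prod_comp_equiv {G : Type*} [Fintype G] {m : ℕ} (c : G → ℝ) (τ : Fin m → G ≃ G) :
    ∑ g : Fin m → G, ∏ i, c (τ i (g i)) = (∑ x, c x) ^ m := by
  rw [← Fintype.prod_sum (fun i x => c (τ i x))]
  simp only [Equiv.sum_comp, Finset.prod_const, Finset.card_univ, Fintype.card_fin]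

theorem stmt_11_general {n : ℕ} {G : Type*} [Group G] [Fintype G]
    (Δ : G → Matrix (Fin n) (Fin n) ℝ)
    (H : Subgroup G) [Fintype H]
    (χ : H → ℝ) (d : ℕ)
    (ν : Matrix (Fin n) (Fin n) ℝ → ℝ)
    (hνsub : ∀ A B, ν (A * B) ≤ ν A * ν B)
    (hν0 : ∀ A, 0 ≤ ν A)
    (Q ρ : Fin n → ℝ)
    (hνQ : ∀ A : Matrix (Fin n) (Fin n) ℝ, |Q ⬝ᵥ A.mulVec ρ| ≤ ν A)
    (m : ℕ) :
    |(d : ℝ) * ((Fintype.card H : ℝ) * (Fintype.card G : ℝ) ^ m)⁻¹ *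
        ∑ h : H, ∑ g : Fin m → G, χ h *
          (Q ⬝ᵥ ((Δ (((List.ofFn g).reverse.prod)⁻¹) *
            ((List.ofFn fun i : Fin m =>
              Δ (if (i : ℕ) = 0 then g i * (h : G) else g i)).reverse.prod)).mulVec ρ))| ≤
      ((d : ℝ) * (Finset.univ.sup' Finset.univ_nonempty fun h : H => |χ h|) *
        (Finset.univ.sup' Finset.univ_nonempty fun g : G => ν (Δ g))) *
      ((Fintype.card G : ℝ)⁻¹ * ∑ g : G, ν (Δ g)) ^ m := by
  set M := Finset.univ.sup' Finset.univ_nonempty fun h : H => |χ h|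
  set N := Finset.univ.sup' Finset.univ_nonempty fun g : G => ν (Δ g)
  set S := ∑ g : G, ν (Δ g)
  let τ (h : H) (i : Fin m) : G ≃ G :=
    if (i : ℕ) = 0 then Equiv.mulRight (h : G) else Equiv.refl G
  have hτ (h : H) (g : Fin m → G) (i : Fin m) :
      (if (i : ℕ) = 0 then g i * (h : G) else g i) = τ h i (g i) := by
    simp only [τ]; split_ifs <;> rfl
  have hM0 : 0 ≤ M :=
    (abs_nonneg _).trans (Finset.le_sup' (fun h : H => |χ h|) (Finset.mem_univ 1))
  have hterm (h : H) (g : Fin m → G) : |χ h * (Q ⬝ᵥ ((Δ (((List.ofFn g).reverse.prod)⁻¹) *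
      ((List.ofFn fun i : Fin m =>
        Δ (if (i : ℕ) = 0 then g i * (h : G) else g i)).reverse.prod)).mulVec ρ))| ≤
      M * N * ∏ i, ν (Δ (τ h i (g i))) := by
    rw [abs_mul, mul_assoc]
    refine mul_le_mul (Finset.le_sup' (fun h : H => |χ h|) (Finset.mem_univ h)) ?_
      (abs_nonneg _) hM0
    simp only [hτ h g]
    exact abs_dotProduct_mul_ofFn_reverse_prod_mulVec_le hνsub hν0 hνQ
      (Finset.le_sup' (fun g : G => ν (Δ g)) (Finset.mem_univ _)) _
  rw [abs_mul, abs_of_nonneg (by positivity)]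
  calc _ ≤ (d : ℝ) * ((Fintype.card H : ℝ) * (Fintype.card G : ℝ) ^ m)⁻¹ *
        ∑ h : H, ∑ g : Fin m → G, M * N * ∏ i, ν (Δ (τ h i (g i))) := by
        gcongr
        exact (Finset.abs_sum_le_sum_abs _ _).trans <| Finset.sum_le_sum fun h _ =>
          (Finset.abs_sum_le_sum_abs _ _).trans <| Finset.sum_le_sum fun g _ => hterm h g
    _ = (d : ℝ) * ((Fintype.card H : ℝ) * (Fintype.card G : ℝ) ^ m)⁻¹ *
        ((Fintype.card H : ℝ) * (M * N * S ^ m)) := by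
      simp only [← Finset.mul_sum, sum_pi_prod_comp_equiv (fun x => ν (Δ x)), Finset.sum_const,
        Finset.card_univ, nsmul_eq_mul, S]
      ring
    _ = (d * M * N) * ((Fintype.card G : ℝ)⁻¹ * S) ^ m := by
      field_simp
      rw [div_pow, mul_div_assoc', eq_div_iff (by positivity)]
      ring

/-- The character randomized benchmarking signal under gate-dependent
noise deviates from a single exponential by
`ε_m = |φ̂| 𝔼_{ĥ,G_1,…,G_m} χ(ĥ) ⟨⟨Q| Δ(G_inv) Δ(G_m) ⋯ Δ(G_2) Δ(G_1 ĥ) |ρ⟩⟩`,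
which satisfies `|ε_m| ≤ δ₁ δ₂^m` with
`δ₁ = |φ̂| ⋅ max_ĥ |χ(ĥ)| ⋅ max_g ‖Δ g‖_◇` and `δ₂ = 𝔼_g ‖Δ g‖_◇`.
Here `ν` is the diamond norm, assumed (as holds for it) submultiplicative, nonnegative
and dominating `|⟨⟨Q| ⋅ |ρ⟩⟩|`. -/
theorem stmt_11 {n : ℕ} {G : Type*} [Group G] [Fintype G]
    (φ : G →* Matrix (Fin n) (Fin n) ℝ)
    (φt : G → Matrix (Fin n) (Fin n) ℝ)
    (L R : Matrix (Fin n) (Fin n) ℝ)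
    (Δ : G → Matrix (Fin n) (Fin n) ℝ)
    (hΔ : ∀ g, Δ g = φt g - L * φ g * R)
    (H : Subgroup G) [Fintype H]
    (χ : H → ℝ) (d : ℕ)
    (ν : Matrix (Fin n) (Fin n) ℝ → ℝ)
    (hνsub : ∀ A B, ν (A * B) ≤ ν A * ν B)
    (hν0 : ∀ A, 0 ≤ ν A)
    (Q ρ : Fin n → ℝ)
    (hνQ : ∀ A : Matrix (Fin n) (Fin n) ℝ, |Q ⬝ᵥ A.mulVec ρ| ≤ ν A)
    (m : ℕ) :
    |(d : ℝ) * ((Fintype.card H : ℝ) * (Fintype.card G : ℝ) ^ m)⁻¹ *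
        ∑ h : H, ∑ g : Fin m → G, χ h *
          (Q ⬝ᵥ ((Δ (((List.ofFn g).reverse.prod)⁻¹) *
            ((List.ofFn fun i : Fin m =>
              Δ (if (i : ℕ) = 0 then g i * (h : G) else g i)).reverse.prod)).mulVec ρ))| ≤
      ((d : ℝ) * (Finset.univ.sup' Finset.univ_nonempty fun h : H => |χ h|) *
        (Finset.univ.sup' Finset.univ_nonempty fun g : G => ν (Δ g))) *
      ((Fintype.card G : ℝ)⁻¹ * ∑ g : G, ν (Δ g)) ^ m :=
  stmt_11_general Δ H χ d ν hνsub hν0 Q ρ hνQ m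
end

section
/- In interleaved character randomized benchmarking under gate-independent noise, the signal admits the matrix form k_m^{λ'} = e_{λ'} M(𝓔_C𝓔)^{m-1} v(𝓔_C𝓔)ᵀ · ⟨⟨Q| P_φ̂ |ρ⟩⟩, where M(𝓕)_{λ,λ̂} = tr(P_λ 𝓒 P_λ̂ 𝓒† 𝓕)/tr(P_λ) and v(𝓕)_λ = tr(P_λ 𝓕)/tr(P_λ); in particular, if 𝓔_C𝓔 = I then k_m^{λ'} = ⟨⟨Q| P_φ̂ |ρ⟩⟩ for all m. -/
/-!
Averaging the sequence matrix over its first group element is a twirl, which by Schur's lemma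
lands in the span of the projectors `P i`; conjugating such a combination by the interleaved
gate and twirling again acts on its coefficients by the mixing matrix `M`. Hence the average
over `m` random gates is `∑ i, (M ^ (m - 1) v) i • P i`, and the character projector
`Pphi ⊆ P λ'` extracts the `λ'` coefficient. If `EC * E = 1` then `v = 1`, and `M` has row sums
`v` because `∑ i, P i = 1` and `C` is orthogonal, so `M ^ (m - 1) v = 1`.
-/

open Matrix

theorem pow_mulVec_eq_self {m R : Type*} [Fintype m] [DecidableEq m] [CommSemiring R]
    {A : Matrix m m R} {x : m → R} (hx : A *ᵥ x = x) (k : ℕ) : A ^ k *ᵥ x = x := by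
  induction k with
  | zero => exact one_mulVec x
  | succ k ih => rw [pow_succ, ← mulVec_mulVec, hx, ih]

section Benchmarking

variable {K n G ι : Type*} [Field K] [Fintype n] [DecidableEq n] [Group G]

-- The noisy sequence `∏ C F φ(gᵢ)` followed by the inverse (= transpose, the gates being
-- orthogonal) of the ideal sequence `∏ C φ(gᵢ)`.
def sequenceMatrix (φ : G →* Matrix n n K) (C F : Matrix n n K) {k : ℕ} (g : Fin k → G) :
    Matrix n n K :=
  ((List.ofFn fun i => C * φ (g i)).reverse.prod)ᵀ *
    (List.ofFn fun i => C * F * φ (g i)).reverse.prod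

theorem sequenceMatrix_cons (φ : G →* Matrix n n K) (C F : Matrix n n K) {k : ℕ} (a : G)
    (t : Fin k → G) :
    sequenceMatrix φ C F (Fin.cons a t : Fin (k + 1) → G) =
      (φ a)ᵀ * (Cᵀ * sequenceMatrix φ C F t * (C * F)) * φ a := by
  simp only [sequenceMatrix, List.ofFn_succ, Fin.cons_zero, Fin.cons_succ, List.reverse_cons,
    List.prod_append, List.prod_cons, List.prod_nil, mul_one, transpose_mul, Matrix.mul_assoc]

variable [Fintype G]

noncomputable def twirl (φ : G →* Matrix n n K) (A : Matrix n n K) : Matrix n n K :=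
  (Fintype.card G : K)⁻¹ • ∑ g, (φ g)ᵀ * A * φ g

noncomputable def averageSequenceMatrix (φ : G →* Matrix n n K) (C F : Matrix n n K) (k : ℕ) :
    Matrix n n K :=
  ((Fintype.card G : K) ^ k)⁻¹ • ∑ g : Fin k → G, sequenceMatrix φ C F g

-- `mixingMatrix P C F` and `decayVector P F` are the paper's `M(𝓕)` and `v(𝓕)` for `𝓕 = F`.
noncomputable def mixingMatrix (P : ι → Matrix n n K) (C F : Matrix n n K) : Matrix ι ι K :=
  of fun i j => trace (P i * Cᵀ * P j * C * F) / trace (P i)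

noncomputable def decayVector (P : ι → Matrix n n K) (F : Matrix n n K) : ι → K :=
  fun j => trace (P j * F) / trace (P j)

theorem averageSequenceMatrix_zero (φ : G →* Matrix n n K) (C F : Matrix n n K) :
    averageSequenceMatrix φ C F 0 = 1 := by
  simp [averageSequenceMatrix, sequenceMatrix]

theorem averageSequenceMatrix_succ (φ : G →* Matrix n n K) (C F : Matrix n n K) (k : ℕ) :
    averageSequenceMatrix φ C F (k + 1) =
      twirl φ (Cᵀ * averageSequenceMatrix φ C F k * (C * F)) := by
  rw [averageSequenceMatrix, ← (Fin.consEquiv fun _ => G).sum_comp, Fintype.sum_prod_type]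
  simp only [Fin.consEquiv, Equiv.coe_fn_mk, sequenceMatrix_cons, twirl, averageSequenceMatrix,
    Matrix.smul_mul, Matrix.mul_smul, Finset.smul_sum, Finset.mul_sum, Finset.sum_mul, smul_smul,
    pow_succ', mul_inv]

theorem decayVector_one {P : ι → Matrix n n K} (htrP : ∀ i, trace (P i) ≠ 0) :
    decayVector P (1 : Matrix n n K) = 1 := by
  ext i
  simp [decayVector, div_self (htrP i)]

variable [Fintype ι]

section Schur

variable {φ : G →* Matrix n n K} {P : ι → Matrix n n K}
  (hSchur : ∀ A, twirl φ A = ∑ i, (trace (P i * A) / trace (P i)) • P i)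
include hSchur

theorem twirl_conj_sum_smul (C F : Matrix n n K) (c : ι → K) :
    twirl φ (Cᵀ * (∑ j, c j • P j) * (C * F)) = ∑ i, (mixingMatrix P C F *ᵥ c) i • P i := by
  rw [hSchur]
  congr! 2 with i
  simp only [Finset.mul_sum, Finset.sum_mul, Matrix.mul_smul, Matrix.smul_mul, trace_sum,
    trace_smul, smul_eq_mul, Finset.sum_div, mulVec, dotProduct, mixingMatrix, of_apply,
    Matrix.mul_assoc]
  congr! 1 with j
  ring

theorem sum_eq_one_of_twirl_eq [CharZero K] (horth : ∀ g, (φ g)ᵀ * φ g = 1)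
    (htrP : ∀ i, trace (P i) ≠ 0) : ∑ i, P i = 1 := by
  have hG : (Fintype.card G : K) ≠ 0 := Nat.cast_ne_zero.2 Fintype.card_ne_zero
  have htwirl_one : twirl φ 1 = 1 := by
    simp only [twirl, Matrix.mul_one, horth, Finset.sum_const, Finset.card_univ,
      ← Nat.cast_smul_eq_nsmul K, smul_smul, inv_mul_cancel₀ hG, one_smul]
  simpa [htwirl_one, div_self (htrP _)] using (hSchur 1).symm

variable [DecidableEq ι]

theorem averageSequenceMatrix_succ_eq_sum {C : Matrix n n K} (hC : Cᵀ * C = 1)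
    (F : Matrix n n K) (k : ℕ) :
    averageSequenceMatrix φ C F (k + 1) =
      ∑ i, (mixingMatrix P C F ^ k *ᵥ decayVector P F) i • P i := by
  induction k with
  | zero =>
    rw [averageSequenceMatrix_succ, averageSequenceMatrix_zero, Matrix.mul_one,
      ← Matrix.mul_assoc, hC, Matrix.one_mul, hSchur]
    simp [decayVector]
  | succ k ih =>
    rw [averageSequenceMatrix_succ, ih, twirl_conj_sum_smul hSchur, pow_succ', ← mulVec_mulVec]

end Schur

theorem mixingMatrix_mulVec_one {P : ι → Matrix n n K} (hP : ∑ i, P i = 1) {C : Matrix n n K}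
    (hC : Cᵀ * C = 1) (F : Matrix n n K) : mixingMatrix P C F *ᵥ 1 = decayVector P F := by
  ext i
  have hrow : ∑ j, trace (P i * Cᵀ * P j * C * F) = trace (P i * F) := by
    simp only [← trace_sum, ← Finset.sum_mul, ← Finset.mul_sum, hP,
      Matrix.mul_assoc, ← Matrix.mul_assoc Cᵀ C, hC, Matrix.one_mul]
  simp only [mulVec, dotProduct, mixingMatrix, of_apply, Pi.one_apply, mul_one, ← Finset.sum_div,
    hrow, decayVector]

theorem sum_smul_mul_eq_of_mul_eq_ite [DecidableEq ι] {P : ι → Matrix n n K}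
    {R : Matrix n n K} {lam : ι} (hR : ∀ i, P i * R = if i = lam then R else 0) (c : ι → K) :
    (∑ i, c i • P i) * R = c lam • R := by
  simp [Finset.sum_mul, hR]

theorem sum_character_mul_dotProduct_eq {H : Subgroup G} [Fintype H] (φ : G →* Matrix n n K)
    (C F Einv : Matrix n n K) (χ : H → K) (d : ℕ) (Q ρ : n → K) (k : ℕ) :
    (d : K) * ((Fintype.card H : K) * (Fintype.card G : K) ^ k)⁻¹ *
        ∑ h : H, ∑ g : Fin k → G, χ h * (Q ⬝ᵥ (Einv * sequenceMatrix φ C F g * φ h) *ᵥ ρ) =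
      Q ⬝ᵥ (Einv * averageSequenceMatrix φ C F k *
        ((d : K) • ((Fintype.card H : K)⁻¹ • ∑ h : H, χ h • φ h))) *ᵥ ρ := by
  simp only [averageSequenceMatrix, Matrix.mul_smul, Matrix.smul_mul, Finset.sum_mul,
    smul_mulVec, sum_mulVec, dotProduct_smul, dotProduct_sum, smul_eq_mul,
    Finset.mul_sum, mul_inv]
  refine Finset.sum_congr rfl fun h _ => Finset.sum_congr rfl fun g _ => ?_
  ring

end Benchmarking

/-- Interleaved character randomized benchmarking under
gate-independent noise.  Group gates are implemented as `E * φ g`, the interleaving gate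
(PTM `Cm`, orthogonal) as `Cm * EC`, the global inverse carries noise `Einv`, and the
character group `H` with subrepresentation of dimension `d`, character `χ` and projector
`Pphi ⊆ P lam` is used.  The signal admits the matrix form
`k_m = e_{λ'} M(EC*E)^{m-1} v(EC*E)ᵀ ⋅ ⟨⟨Q| Einv Pphi |ρ⟩⟩` where
`M(F)_{i,j} = tr(P i 𝓒† P j 𝓒 F)/tr(P i)` (the mixing matrix of `C`, conjugated by the
PTM of the interleaving gate) and `v(F)_j = tr(P j F)/tr(P j)`; in particular, if
`EC * E = 1` then `k_m = ⟨⟨Q| Einv Pphi |ρ⟩⟩` for all `m ≥ 1`. -/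
theorem stmt_19 {n : ℕ} {G : Type*} [Group G] [Fintype G]
    {ι : Type*} [Fintype ι] [DecidableEq ι]
    (φ : G →* Matrix (Fin n) (Fin n) ℝ)
    (horth : ∀ g, φ g * (φ g)ᵀ = 1 ∧ (φ g)ᵀ * φ g = 1)
    (E EC Einv Cm : Matrix (Fin n) (Fin n) ℝ)
    (hCm : Cm * Cmᵀ = 1 ∧ Cmᵀ * Cm = 1)
    (P : ι → Matrix (Fin n) (Fin n) ℝ)
    (htrP : ∀ i, Matrix.trace (P i) ≠ 0)
    (hSchur : ∀ A : Matrix (Fin n) (Fin n) ℝ,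
      (Fintype.card G : ℝ)⁻¹ • ∑ g : G, (φ g)ᵀ * A * φ g =
        ∑ i, (Matrix.trace (P i * A) / Matrix.trace (P i)) • P i)
    (H : Subgroup G) [Fintype H]
    (χ : H → ℝ) (d : ℕ) (Pphi : Matrix (Fin n) (Fin n) ℝ)
    (hcharproj : (d : ℝ) • ((Fintype.card H : ℝ)⁻¹ • ∑ h : H, χ h • φ (h : G)) = Pphi)
    (lam : ι)
    (hPphi : ∀ i, P i * Pphi = if i = lam then Pphi else 0)
    (Q ρ : Fin n → ℝ) (m : ℕ) (hm : 1 ≤ m) :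
    ∀ kval : ℝ,
      kval = (d : ℝ) * ((Fintype.card H : ℝ) * (Fintype.card G : ℝ) ^ m)⁻¹ *
        ∑ h : H, ∑ g : Fin m → G, χ h *
          (Q ⬝ᵥ ((Einv * ((List.ofFn fun i => Cm * φ (g i)).reverse.prod)ᵀ *
            ((List.ofFn fun i => Cm * EC * E * φ (g i)).reverse.prod) *
            φ (h : G)).mulVec ρ)) →
      (kval =
        (∑ j, ((Matrix.of fun i j' =>
            Matrix.trace (P i * Cmᵀ * P j' * Cm * (EC * E)) / Matrix.trace (P i) :
              Matrix ι ι ℝ) ^ (m - 1)) lam j *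
          (Matrix.trace (P j * (EC * E)) / Matrix.trace (P j))) *
        (Q ⬝ᵥ ((Einv * Pphi).mulVec ρ)) ∧
      (EC * E = 1 → kval = Q ⬝ᵥ ((Einv * Pphi).mulVec ρ))) := by
  intro kval hk
  obtain ⟨k, rfl⟩ : ∃ k, m = k + 1 := ⟨m - 1, by omega⟩
  have hsignal : kval = (mixingMatrix P Cm (EC * E) ^ k *ᵥ decayVector P (EC * E)) lam *
      Q ⬝ᵥ (Einv * Pphi) *ᵥ ρ := by
    have hsum :
        kval = Q ⬝ᵥ (Einv * averageSequenceMatrix φ Cm (EC * E) (k + 1) * Pphi) *ᵥ ρ := by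
      rw [hk, ← hcharproj, ← sum_character_mul_dotProduct_eq]
      simp only [sequenceMatrix, Matrix.mul_assoc]
    rw [hsum, averageSequenceMatrix_succ_eq_sum hSchur hCm.2, Matrix.mul_assoc,
      sum_smul_mul_eq_of_mul_eq_ite hPphi, Matrix.mul_smul, smul_mulVec, dotProduct_smul,
      smul_eq_mul]
  refine ⟨hsignal, fun hF => ?_⟩
  have hrow : mixingMatrix P Cm 1 *ᵥ 1 = 1 := by
    have hP := sum_eq_one_of_twirl_eq hSchur (fun g => (horth g).2) htrP
    rw [mixingMatrix_mulVec_one hP hCm.2, decayVector_one htrP]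
  rw [hsignal, hF, decayVector_one htrP, pow_mulVec_eq_self hrow, Pi.one_apply, one_mul]
end
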